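/- For a Fuchsian system on ℙ¹ with potential Φ(x) = ∑ⱼ Φⱼ/(x−zⱼ) and ∑ⱼ Φⱼ = 0, Schlesinger's equations imply that the one-forms H_j dz_j with H_j := ∑_{k≠j} Tr(Φⱼ Φₖ)/(zⱼ−zₖ) satisfy the closedness (symmetry) condition ∂_{z_i} H_j = ∂_{z_j} H_i for i ≠ j, so that ∑ⱼ H_j dz_j is a closed 1-form (log of the isomonodromic tau-function). -/

import Mathlib

/-!
For `i ≠ j` one computes `∂_{z_i} H_j = Tr(Φ_i Φ_j) / (z_i - z_j)²`, which is symmetric in `i, j`.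
Differentiating `H_j` produces this term from the coefficient `1 / (z_j - z_i)` and, besides,
the terms in which `∂_{z_i}` hits the residues. Substituting Schlesinger's equations, these
collapse by trace cyclicity to `Tr([Φ_i, Φ_j] Φ_k)` times
`1 / ((z_i - z_j)(z_i - z_k)) + 1 / ((z_j - z_i)(z_j - z_k)) + 1 / ((z_k - z_i)(z_k - z_j))`
for each `k ∉ {i, j}`, and this partial-fraction sum vanishes.
-/

attribute [local instance] Matrix.linftyOpNormedAddCommGroup Matrix.linftyOpNormedRing
  Matrix.linftyOpNormedAlgebra

open Finset

namespace Matrix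

section Algebra

variable {n K : Type*} [Fintype n]

theorem trace_commutator_mul_self [CommRing K] (A B : Matrix n n K) :
    ((A * B - B * A) * A).trace = 0 := by
  rw [sub_mul, trace_sub, Matrix.mul_assoc, Matrix.mul_assoc, trace_mul_cycle' B A A, sub_self]

variable [Field K]

theorem trace_commutator_partial_fraction {A B C : Matrix n n K} {a b c : K}
    (hab : a ≠ b) (hbc : b ≠ c) (hca : c ≠ a) :
    (b - c)⁻¹ * (((b - a)⁻¹ • (A * B - B * A)) * C + B * ((c - a)⁻¹ • (A * C - C * A))).trace
      = (b - a)⁻¹ * ((a - c)⁻¹ * (B * (C * A - A * C)).trace) := by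
  simp only [smul_mul_assoc, mul_smul_comm, trace_add, trace_smul, smul_eq_mul, mul_sub, sub_mul,
    trace_sub, ← Matrix.mul_assoc, trace_mul_cycle B C A]
  have := sub_ne_zero.2 hab
  have := sub_ne_zero.2 hbc
  have := sub_ne_zero.2 hca
  field_simp
  ring

variable {ι : Type*} [Fintype ι] [DecidableEq ι]

/-- `D k` plays the role of `∂_{z_i} Φ_k` at a point where `Φ_k = A k`. -/
theorem sum_inv_sub_mul_trace_schlesinger_eq_zero {A D : ι → Matrix n n K} {z : ι → K}
    (hz : Function.Injective z) {i j : ι} (hij : i ≠ j)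
    (hD : ∀ k, i ≠ k → D k = (z k - z i)⁻¹ • (A i * A k - A k * A i))
    (hDi : D i = -∑ k ∈ univ.erase i, (z i - z k)⁻¹ • (A k * A i - A i * A k)) :
    ∑ k ∈ univ.erase j, (z j - z k)⁻¹ * (D j * A k + A j * D k).trace = 0 := by
  have term_i : (z j - z i)⁻¹ * (D j * A i + A j * D i).trace
      = -∑ k ∈ (univ.erase j).erase i,
          (z j - z i)⁻¹ * ((z i - z k)⁻¹ * (A j * (A k * A i - A i * A k)).trace) := by
    have hj : j ∈ univ.erase i := mem_erase.2 ⟨hij.symm, mem_univ j⟩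
    rw [hD j hij, hDi, smul_mul_assoc, trace_add, trace_smul, trace_commutator_mul_self,
      smul_zero, zero_add, Matrix.mul_neg, trace_neg, Matrix.mul_sum, trace_sum,
      ← add_sum_erase _ _ hj, mul_smul_comm, trace_smul, trace_mul_comm,
      trace_commutator_mul_self, smul_zero, zero_add, mul_neg, mul_sum, erase_right_comm]
    simp only [mul_smul_comm, trace_smul, smul_eq_mul]
  have term_k : ∀ k ∈ (univ.erase j).erase i, (z j - z k)⁻¹ * (D j * A k + A j * D k).trace
      = (z j - z i)⁻¹ * ((z i - z k)⁻¹ * (A j * (A k * A i - A i * A k)).trace) := by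
    intro k hk
    obtain ⟨hki, hkj⟩ : k ≠ i ∧ k ≠ j := by simpa using hk
    rw [hD j hij, hD k hki.symm]
    exact trace_commutator_partial_fraction (hz.ne hij) (hz.ne hkj.symm) (hz.ne hki)
  rw [← add_sum_erase _ _ (mem_erase.2 ⟨hij, mem_univ i⟩), term_i, sum_congr rfl term_k,
    neg_add_cancel]

end Algebra

noncomputable def traceCLM (n 𝕜 : Type*) [Fintype n] [NontriviallyNormedField 𝕜]
    [CompleteSpace 𝕜] : Matrix n n 𝕜 →L[𝕜] 𝕜 :=
  LinearMap.toContinuousLinearMap (traceLinearMap n 𝕜 𝕜)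

end Matrix

section Calculus

variable {𝕜 n ι E : Type*} [NontriviallyNormedField 𝕜] [Fintype n] [DecidableEq n]
  [NormedAddCommGroup E] [NormedSpace 𝕜 E]

section Trace

variable [CompleteSpace 𝕜] {F G : E → Matrix n n 𝕜} {x : E}

theorem DifferentiableAt.trace_mul (hF : DifferentiableAt 𝕜 F x) (hG : DifferentiableAt 𝕜 G x) :
    DifferentiableAt 𝕜 (fun x => (F x * G x).trace) x :=
  (Matrix.traceCLM n 𝕜).differentiableAt.comp x (hF.mul hG)

theorem fderiv_trace_mul_apply (hF : DifferentiableAt 𝕜 F x) (hG : DifferentiableAt 𝕜 G x)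
    (v : E) :
    fderiv 𝕜 (fun x => (F x * G x).trace) x v
      = (fderiv 𝕜 F x v * G x + F x * fderiv 𝕜 G x v).trace := by
  have : HasFDerivAt (fun x => (F x * G x).trace) _ x :=
    (Matrix.traceCLM n 𝕜).hasFDerivAt.comp x (hF.hasFDerivAt.mul' hG.hasFDerivAt)
  rw [this.fderiv]
  -- `traceCLM` lives on the product topology of `Matrix n n 𝕜`, the derivative on the `linfty`
  -- operator-norm one; they agree only up to unfolding, so `simp` cannot rewrite here.
  exact congrArg Matrix.trace (add_comm _ _)

end Trace

variable [Fintype ι]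

theorem differentiableAt_inv_sub {z : ι → 𝕜} {j k : ι} (h : z j ≠ z k) :
    DifferentiableAt 𝕜 (fun z : ι → 𝕜 => (z j - z k)⁻¹) z := by
  fun_prop (disch := exact sub_ne_zero.2 h)

theorem fderiv_inv_sub_apply {z : ι → 𝕜} {j k : ι} (h : z j ≠ z k) (v : ι → 𝕜) :
    fderiv 𝕜 (fun z : ι → 𝕜 => (z j - z k)⁻¹) z v = -(v j - v k) / (z j - z k) ^ 2 := by
  have hsub : HasFDerivAt (fun z : ι → 𝕜 => z j - z k)
      (ContinuousLinearMap.proj (R := 𝕜) (φ := fun _ : ι => 𝕜) j - ContinuousLinearMap.proj k) z :=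
    (hasFDerivAt_apply j z).fun_sub (hasFDerivAt_apply k z)
  have : HasFDerivAt (fun z : ι → 𝕜 => (z j - z k)⁻¹) _ z :=
    (hasFDerivAt_inv (sub_ne_zero.2 h)).comp z hsub
  rw [this.fderiv]
  simp [div_eq_mul_inv]
  ring

variable [CompleteSpace 𝕜] [DecidableEq ι] {Φ : ι → (ι → 𝕜) → Matrix n n 𝕜} {z : ι → 𝕜}

theorem fderiv_sum_inv_sub_mul_trace_apply (hΦ : ∀ k, DifferentiableAt 𝕜 (Φ k) z) {j : ι}
    (hz : ∀ k, k ≠ j → z j ≠ z k) (v : ι → 𝕜) :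
    fderiv 𝕜 (fun z => ∑ k ∈ univ.erase j, (z j - z k)⁻¹ * (Φ j z * Φ k z).trace) z v
      = ∑ k ∈ univ.erase j,
          ((z j - z k)⁻¹ * (fderiv 𝕜 (Φ j) z v * Φ k z + Φ j z * fderiv 𝕜 (Φ k) z v).trace
            - (v j - v k) / (z j - z k) ^ 2 * (Φ j z * Φ k z).trace) := by
  have hzk : ∀ k ∈ univ.erase j, z j ≠ z k := fun k hk => hz k (ne_of_mem_erase hk)
  rw [fderiv_fun_sum fun k hk =>
      (differentiableAt_inv_sub (hzk k hk)).fun_mul ((hΦ j).trace_mul (hΦ k)),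
    _root_.sum_apply]
  refine sum_congr rfl fun k hk => ?_
  rw [fderiv_fun_mul (differentiableAt_inv_sub (hzk k hk)) ((hΦ j).trace_mul (hΦ k)),
    add_apply, smul_apply, smul_apply, fderiv_inv_sub_apply (hzk k hk),
    fderiv_trace_mul_apply (hΦ j) (hΦ k), smul_eq_mul, smul_eq_mul]
  ring

theorem fderiv_sum_inv_sub_mul_trace_single (hΦ : ∀ k, DifferentiableAt 𝕜 (Φ k) z)
    (hz : Function.Injective z) {i j : ι} (hij : i ≠ j) :
    fderiv 𝕜 (fun z => ∑ k ∈ univ.erase j, (z j - z k)⁻¹ * (Φ j z * Φ k z).trace) z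
        (Pi.single i 1)
      = ∑ k ∈ univ.erase j, (z j - z k)⁻¹ *
            (fderiv 𝕜 (Φ j) z (Pi.single i 1) * Φ k z
              + Φ j z * fderiv 𝕜 (Φ k) z (Pi.single i 1)).trace
        + (Φ j z * Φ i z).trace / (z j - z i) ^ 2 := by
  have hcoef : ∑ k ∈ univ.erase j,
      ((Pi.single i 1 : ι → 𝕜) j - (Pi.single i 1 : ι → 𝕜) k) / (z j - z k) ^ 2
        * (Φ j z * Φ k z).trace = -((Φ j z * Φ i z).trace / (z j - z i) ^ 2) := by
    rw [sum_eq_single_of_mem i (mem_erase.2 ⟨hij, mem_univ i⟩)]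
    · simp [Pi.single_eq_of_ne hij.symm, div_eq_inv_mul]
    · intro k _ hki
      simp [Pi.single_eq_of_ne hij.symm, Pi.single_eq_of_ne hki]
  rw [fderiv_sum_inv_sub_mul_trace_apply hΦ (fun k hk => hz.ne hk.symm), sum_sub_distrib, hcoef,
    sub_neg_eq_add]

end Calculus

/-- For a Fuchsian system on `ℙ¹`, Schlesinger's equations imply that
the Hamiltonians `H_j = ∑_{k≠j} Tr(Φ_j Φ_k)/(z_j−z_k)` satisfy the closedness
(symmetry) condition `∂_{z_i} H_j = ∂_{z_j} H_i` for `i ≠ j`, so that `∑_j H_j dz_j`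
is a closed 1-form (the log of the isomonodromic tau-function). Partial derivatives
are expressed as `fderiv` applied to the coordinate direction `Pi.single i 1`. -/
theorem schlesinger_hamiltonians_closed
    {M n : ℕ}
    (Φ : Fin M → (Fin M → ℂ) → Matrix (Fin n) (Fin n) ℂ)
    (U : Set (Fin M → ℂ)) (hU : IsOpen U)
    (hdist : ∀ z ∈ U, ∀ i j : Fin M, i ≠ j → z i ≠ z j)
    (hdiff : ∀ j, DifferentiableOn ℂ (Φ j) U)
    -- Schlesinger's equations: ∂_{z_i}Φ_j = [Φ_i, Φ_j]/(z_j − z_i) for i ≠ j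
    (hSch₁ : ∀ z ∈ U, ∀ i j : Fin M, i ≠ j →
      fderiv ℂ (Φ j) z (Pi.single i 1)
        = (z j - z i)⁻¹ • (Φ i z * Φ j z - Φ j z * Φ i z))
    -- and ∂_{z_j}Φ_j = −∑_{k≠j} [Φ_k, Φ_j]/(z_j − z_k)
    (hSch₂ : ∀ z ∈ U, ∀ j : Fin M,
      fderiv ℂ (Φ j) z (Pi.single j 1)
        = -∑ k ∈ Finset.univ.erase j,
            (z j - z k)⁻¹ • (Φ k z * Φ j z - Φ j z * Φ k z))
    (H : Fin M → (Fin M → ℂ) → ℂ)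
    (hH : ∀ j z, H j z
      = ∑ k ∈ Finset.univ.erase j, (z j - z k)⁻¹ * (Φ j z * Φ k z).trace) :
    ∀ z ∈ U, ∀ i j : Fin M, i ≠ j →
      fderiv ℂ (H j) z (Pi.single i 1) = fderiv ℂ (H i) z (Pi.single j 1) := by
  intro z hz i j hij
  obtain rfl : H = fun j z => ∑ k ∈ univ.erase j, (z j - z k)⁻¹ * (Φ j z * Φ k z).trace :=
    funext₂ hH
  have hΦ k : DifferentiableAt ℂ (Φ k) z := (hdiff k).differentiableAt (hU.mem_nhds hz)
  have hinj : Function.Injective z := fun a b hab => by_contra fun h => hdist z hz a b h hab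
  rw [fderiv_sum_inv_sub_mul_trace_single hΦ hinj hij,
    fderiv_sum_inv_sub_mul_trace_single hΦ hinj hij.symm,
    Matrix.sum_inv_sub_mul_trace_schlesinger_eq_zero (A := fun k => Φ k z) hinj hij
      (hSch₁ z hz i) (hSch₂ z hz i),
    Matrix.sum_inv_sub_mul_trace_schlesinger_eq_zero (A := fun k => Φ k z) hinj hij.symm
      (hSch₁ z hz j) (hSch₂ z hz j),
    Matrix.trace_mul_comm, ← neg_sub, neg_sq]
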